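/- Let a = (1 + √10)/6, T₃ = {x ∈ ℝ³ : x₁ > 1/2, ‖x − a·e₁‖ < 1/2, ‖x‖ < 1}, and S₃ = T₃ ∪ (−T₃). Then vol(S₃)/vol(B₃) > 1/8. -/

import Mathlib

open MeasureTheory Metric

noncomputable def a : ℝ := (1 + Real.sqrt 10) / 6

noncomputable def T3 : Set (EuclideanSpace ℝ (Fin 3)) :=
  {x | x 0 > 1/2 ∧ ‖x - a • EuclideanSpace.single (0 : Fin 3) (1 : ℝ)‖ < 1/2 ∧ ‖x‖ < 1}

/-! Since `T3` and `-T3` are disjoint mirror images, `vol S₃ = 2 vol T3`, and it suffices to show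
`vol T3 > π / 12`. For this, `T3` contains two open coaxial cylinders around the `x₀`-axis, of
total volume `0.0864… π`. -/

theorem measure_union_neg_of_disjoint {G : Type*} [MeasurableSpace G] [InvolutiveNeg G]
    [MeasurableNeg G] (μ : Measure G) [μ.IsNegInvariant] {s : Set G} (hs : MeasurableSet s)
    (hd : Disjoint s (-s)) : μ (s ∪ -s) = 2 * μ s := by
  rw [measure_union hd hs.neg, Measure.measure_neg, two_mul]

section AxialCylinder

variable {n : ℕ}

def axialCylinder (n : ℕ) (l u r : ℝ) : Set (EuclideanSpace ℝ (Fin (n + 1))) :=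
  {x | x 0 ∈ Set.Ioo l u ∧ ∑ i : Fin n, x i.succ ^ 2 < r ^ 2}

theorem isOpen_axialCylinder (l u r : ℝ) : IsOpen (axialCylinder n l u r) :=
  (isOpen_Ioo.preimage (by fun_prop)).and (isOpen_lt (by fun_prop) continuous_const)

theorem disjoint_axialCylinder {l u r l' u' r' : ℝ} (h : u ≤ l') :
    Disjoint (axialCylinder n l u r) (axialCylinder n l' u' r') :=
  Set.disjoint_left.2 fun _ hx hx' => (hx.1.2.trans_le h).not_gt hx'.1.1

theorem volume_axialCylinder (l u : ℝ) {r : ℝ} (hr : 0 ≤ r) :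
    volume (axialCylinder n l u r) =
      ENNReal.ofReal (u - l) * volume (ball (0 : EuclideanSpace ℝ (Fin n)) r) := by
  set D : Set (Fin n → ℝ) := {y | ∑ i, y i ^ 2 < r ^ 2}
  have hD : (MeasurableEquiv.toLp 2 (Fin n → ℝ)).symm ⁻¹' D = ball 0 r := by
    ext y
    rw [mem_ball_zero_iff, ← pow_lt_pow_iff_left₀ (norm_nonneg y) hr two_ne_zero,
      EuclideanSpace.real_norm_sq_eq]
    rfl
  set e := (MeasurableEquiv.toLp 2 (Fin (n + 1) → ℝ)).symm.trans
    (MeasurableEquiv.piFinSuccAbove (fun _ => ℝ) 0)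
  have he : MeasurePreserving e :=
    (EuclideanSpace.volume_preserving_symm_measurableEquiv_toLp _).trans
      (volume_preserving_piFinSuccAbove _ 0)
  have hcyl : axialCylinder n l u r = e ⁻¹' (Set.Ioo l u ×ˢ D) := rfl
  rw [hcyl, he.measure_preimage_equiv, Measure.volume_eq_prod, Measure.prod_prod, Real.volume_Ioo,
    ← hD, (EuclideanSpace.volume_preserving_symm_measurableEquiv_toLp _).measure_preimage_equiv]

theorem axialCylinder_subset_ball {l u r c ρ : ℝ} (hρ : 0 ≤ ρ)
    (hl : (l - c) ^ 2 + r ^ 2 ≤ ρ ^ 2) (hu : (u - c) ^ 2 + r ^ 2 ≤ ρ ^ 2) :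
    axialCylinder n l u r ⊆ ball (c • EuclideanSpace.single 0 1) ρ := by
  rintro x ⟨⟨hxl, hxu⟩, hx⟩
  rw [mem_ball, dist_eq_norm, ← pow_lt_pow_iff_left₀ (norm_nonneg _) hρ two_ne_zero,
    EuclideanSpace.real_norm_sq_eq, Fin.sum_univ_succ]
  simp only [PiLp.sub_apply, PiLp.smul_apply, PiLp.single_eq_same, smul_eq_mul, mul_one, ne_eq,
    Fin.succ_ne_zero, not_false_eq_true, PiLp.single_eq_of_ne, mul_zero, sub_zero]
  -- `t ↦ (t - c) ^ 2` is monotone on either side of `c`, so the endpoint bounds suffice.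
  have : (x 0 - c) ^ 2 ≤ ρ ^ 2 - r ^ 2 := by
    rcases le_total c (x 0) with h | h <;> nlinarith
  linarith

end AxialCylinder

theorem a_mem_Ioo : a ∈ Set.Ioo (69 / 100) (139 / 200) := by
  have h₁ : (157 / 50 : ℝ) < Real.sqrt 10 := (Real.lt_sqrt (by norm_num)).2 (by norm_num)
  have h₂ : Real.sqrt 10 < 317 / 100 := (Real.sqrt_lt' (by norm_num)).2 (by norm_num)
  constructor <;> unfold a <;> linarith

theorem axialCylinder_subset_T3 {l u r : ℝ} (hl : 1 / 2 ≤ l)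
    (hla : (l - a) ^ 2 + r ^ 2 ≤ (1 / 2) ^ 2) (hua : (u - a) ^ 2 + r ^ 2 ≤ (1 / 2) ^ 2)
    (hl₀ : l ^ 2 + r ^ 2 ≤ 1) (hu₀ : u ^ 2 + r ^ 2 ≤ 1) :
    axialCylinder 2 l u r ⊆ T3 := by
  intro x hx
  have h₀ := axialCylinder_subset_ball (c := 0) zero_le_one (by simpa using hl₀)
    (by simpa using hu₀) hx
  have ha := axialCylinder_subset_ball (by norm_num) hla hua hx
  rw [mem_ball, dist_eq_norm] at h₀ ha
  exact ⟨hl.trans_lt hx.1.1, ha, by simpa using h₀⟩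

theorem T3_subset_ball : T3 ⊆ ball 0 1 := fun _ hx => mem_ball_zero_iff.2 hx.2.2

theorem isOpen_T3 : IsOpen T3 :=
  (isOpen_lt continuous_const (by fun_prop)).and
    ((isOpen_lt (by fun_prop) continuous_const).and (isOpen_lt (by fun_prop) continuous_const))

theorem disjoint_T3_neg : Disjoint T3 (-T3) :=
  Set.disjoint_left.2 fun x hx hx' => by
    have : (-x) 0 > 1 / 2 := hx'.1
    simp only [PiLp.neg_apply] at this
    linarith [hx.1]

theorem ofReal_le_volume_T3 :
    ENNReal.ofReal (Real.pi * (19 / 50 * (23 / 50) ^ 2 + 1 / 25 * (39 / 100) ^ 2)) ≤ volume T3 := by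
  obtain ⟨ha₁, ha₂⟩ := a_mem_Ioo
  -- On `1/2 < x₀ < 22/25` the ball around `a • e₀` is the binding constraint, on
  -- `22/25 < x₀ < 23/25` the unit ball is.
  have h₁ : axialCylinder 2 (1 / 2) (22 / 25) (23 / 50) ⊆ T3 :=
    axialCylinder_subset_T3 le_rfl (by nlinarith) (by nlinarith) (by norm_num) (by norm_num)
  have h₂ : axialCylinder 2 (22 / 25) (23 / 25) (39 / 100) ⊆ T3 :=
    axialCylinder_subset_T3 (by norm_num) (by nlinarith) (by nlinarith) (by norm_num) (by norm_num)
  calc ENNReal.ofReal (Real.pi * (19 / 50 * (23 / 50) ^ 2 + 1 / 25 * (39 / 100) ^ 2))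
      = volume (axialCylinder 2 (1 / 2) (22 / 25) (23 / 50)) +
          volume (axialCylinder 2 (22 / 25) (23 / 25) (39 / 100)) := by
        rw [volume_axialCylinder _ _ (by norm_num), volume_axialCylinder _ _ (by norm_num),
          EuclideanSpace.volume_ball_fin_two, EuclideanSpace.volume_ball_fin_two,
          ← ENNReal.ofReal_pow (by norm_num), ← ENNReal.ofReal_pow (by norm_num),
          ← ENNReal.ofReal_mul (by positivity), ← ENNReal.ofReal_mul (by positivity),
          ← ENNReal.ofReal_mul (by norm_num), ← ENNReal.ofReal_mul (by norm_num),
          ← ENNReal.ofReal_add (by positivity) (by positivity)]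
        congr 1
        ring
    _ = volume (axialCylinder 2 (1 / 2) (22 / 25) (23 / 50) ∪
          axialCylinder 2 (22 / 25) (23 / 25) (39 / 100)) :=
        (measure_union (disjoint_axialCylinder le_rfl)
          (isOpen_axialCylinder _ _ _).measurableSet).symm
    _ ≤ volume T3 := measure_mono (Set.union_subset h₁ h₂)

theorem stmt_9 :
    (volume (T3 ∪ -T3)).toReal >
      (1/8) * (volume (ball (0 : EuclideanSpace ℝ (Fin 3)) 1)).toReal := by
  have hfin : volume T3 ≠ ⊤ := ((measure_mono T3_subset_ball).trans_lt measure_ball_lt_top).ne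
  have hT := (ENNReal.ofReal_le_iff_le_toReal hfin).1 ofReal_le_volume_T3
  rw [measure_union_neg_of_disjoint volume isOpen_T3.measurableSet disjoint_T3_neg,
    EuclideanSpace.volume_ball_fin_three, ENNReal.ofReal_one, one_pow, one_mul, ENNReal.toReal_mul,
    ENNReal.toReal_ofReal (by positivity), ENNReal.toReal_ofNat]
  linarith [Real.pi_pos]
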